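/- arXiv:1905.10457 — 2 statements merged into one kernel-verified Lean document; each statement's English description precedes it below -/
import Mathlib

section
/- For all x ∈ [a,b], the identity f_m(x) = f_0(x) - Σ_{i=1}^{m} C·g_i(x)/4^i holds, where C = (b-a)², f_0(x) = (a+b)x - ab, and g_i are the sawtooth functions g_1 = tent on [a,b], g_i = h ∘ g_{i-1}. -/
/-- The uniform dyadic node ξ_{k,m} = a + k(b-a)/2^m. -/
noncomputable def node (a b : ℝ) (m k : ℕ) : ℝ := a + k * (b - a) / 2 ^ m

/-- `f` is the continuous piecewise linear interpolant of `g` at the nodes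
`ξ_{k,m}`, i.e. on each subinterval it is the affine function agreeing with `g`
at the two endpoint nodes. -/
def IsPLInterp (a b : ℝ) (m : ℕ) (g f : ℝ → ℝ) : Prop :=
  ∀ k < 2 ^ m, ∀ x ∈ Set.Icc (node a b m k) (node a b m (k + 1)),
    f x = g (node a b m k) +
      (g (node a b m (k + 1)) - g (node a b m k)) /
        (node a b m (k + 1) - node a b m k) * (x - node a b m k)
/-- The hat function on [0,1]. -/
noncomputable def hat (x : ℝ) : ℝ := if x < 1 / 2 then 2 * x else 2 * (1 - x)

/-- The tent function on [a,b]. -/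
noncomputable def tent (a b x : ℝ) : ℝ := min (2 * (x - a) / (b - a)) (2 * (b - x) / (b - a))

/-- The sawtooth functions: g₁ is the tent on [a,b], g_m = hat ∘ g_{m-1}. -/
noncomputable def saw (a b : ℝ) : ℕ → ℝ → ℝ
  | 0 => fun _ => 0
  | 1 => tent a b
  | (n + 2) => fun x => hat (saw a b (n + 1) x)

/-!
On a cell `[p, q]` the chord of `x²` is `x² + (x - p)(q - x)`. Halving the cell changes the
error term by `(q - p)²/4` times the tent of `[p, q]`, and on each level-`n` cell the sawtooth
`saw (n + 1)` is exactly that tent, because `hat` maps the tent of a cell onto the tents of its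
two halves. Summing the per-level differences telescopes from `f₀`.
-/

open Set

section Tent

variable {p q x : ℝ}

lemma hat_eq_min (s : ℝ) : hat s = min (2 * s) (2 * (1 - s)) := by
  unfold hat
  split_ifs with hs
  · rw [min_eq_left (by linarith)]
  · rw [min_eq_right (by linarith)]

lemma tent_of_le_midpoint (hpq : p < q) (hx : x ≤ (p + q) / 2) :
    tent p q x = 2 * (x - p) / (q - p) :=
  min_eq_left (div_le_div_of_nonneg_right (by linarith) (sub_pos.2 hpq).le)

lemma tent_of_midpoint_le (hpq : p < q) (hx : (p + q) / 2 ≤ x) :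
    tent p q x = 2 * (q - x) / (q - p) :=
  min_eq_right (div_le_div_of_nonneg_right (by linarith) (sub_pos.2 hpq).le)

lemma hat_tent_of_le_midpoint (hpq : p < q) (hx : x ≤ (p + q) / 2) :
    hat (tent p q x) = tent p ((p + q) / 2) x := by
  have hqp : q - p ≠ 0 := sub_ne_zero.2 hpq.ne'
  rw [tent_of_le_midpoint hpq hx, hat_eq_min, tent, show (p + q) / 2 - p = (q - p) / 2 by ring]
  congr 1 <;> field_simp
  ring

lemma hat_tent_of_midpoint_le (hpq : p < q) (hx : (p + q) / 2 ≤ x) :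
    hat (tent p q x) = tent ((p + q) / 2) q x := by
  have hqp : q - p ≠ 0 := sub_ne_zero.2 hpq.ne'
  rw [tent_of_midpoint_le hpq hx, hat_eq_min, tent, min_comm,
    show q - (p + q) / 2 = (q - p) / 2 by ring]
  congr 1 <;> field_simp
  ring

lemma sq_chord_eq (hpq : p ≠ q) (x : ℝ) :
    p ^ 2 + (q ^ 2 - p ^ 2) / (q - p) * (x - p) = x ^ 2 + (x - p) * (q - x) := by
  have hqp : q - p ≠ 0 := sub_ne_zero.2 hpq.symm
  field_simp
  ring

lemma chord_err_sub_left_half (hpq : p < q) (hx : x ≤ (p + q) / 2) :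
    (x - p) * (q - x) - (x - p) * ((p + q) / 2 - x) = (q - p) ^ 2 / 4 * tent p q x := by
  have hqp : q - p ≠ 0 := sub_ne_zero.2 hpq.ne'
  rw [tent_of_le_midpoint hpq hx]
  field_simp
  ring

lemma chord_err_sub_right_half (hpq : p < q) (hx : (p + q) / 2 ≤ x) :
    (x - p) * (q - x) - (x - (p + q) / 2) * (q - x) = (q - p) ^ 2 / 4 * tent p q x := by
  have hqp : q - p ≠ 0 := sub_ne_zero.2 hpq.ne'
  rw [tent_of_midpoint_le hpq hx]
  field_simp
  ring

end Tent

section Node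

variable (a b : ℝ) (n k : ℕ)

lemma node_zero_zero : node a b 0 0 = a := by simp [node]

lemma node_zero_one : node a b 0 1 = b := by simp [node]

lemma node_succ_sub_node : node a b n (k + 1) - node a b n k = (b - a) / 2 ^ n := by
  unfold node; push_cast; ring

lemma node_succ_two_mul : node a b (n + 1) (2 * k) = node a b n k := by
  unfold node; push_cast; ring

lemma node_succ_two_mul_add_one :
    node a b (n + 1) (2 * k + 1) = (node a b n k + node a b n (k + 1)) / 2 := by
  unfold node; push_cast; ring

lemma node_succ_two_mul_add_two : node a b (n + 1) (2 * k + 1 + 1) = node a b n (k + 1) := by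
  unfold node; push_cast; ring

end Node

lemma node_lt_node_succ {a b : ℝ} (hab : a < b) (n k : ℕ) :
    node a b n k < node a b n (k + 1) := by
  have := node_succ_sub_node a b n k
  have : 0 < (b - a) / 2 ^ n := by have := sub_pos.2 hab; positivity
  linarith

lemma exists_mem_Icc_node {a b x : ℝ} (hx : x ∈ Icc a b) (n : ℕ) :
    ∃ k < 2 ^ n, x ∈ Icc (node a b n k) (node a b n (k + 1)) := by
  induction n with
  | zero => exact ⟨0, by norm_num, by rwa [node_zero_zero, zero_add, node_zero_one]⟩
  | succ n ih =>
    obtain ⟨k, hk, hxk⟩ := ih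
    rcases le_total x ((node a b n k + node a b n (k + 1)) / 2) with hm | hm
    · refine ⟨2 * k, by rw [pow_succ]; omega, ?_⟩
      rw [node_succ_two_mul, node_succ_two_mul_add_one]
      exact ⟨hxk.1, hm⟩
    · refine ⟨2 * k + 1, by rw [pow_succ]; omega, ?_⟩
      rw [node_succ_two_mul_add_one, node_succ_two_mul_add_two]
      exact ⟨hm, hxk.2⟩

lemma IsPLInterp.eq_sq_add {a b : ℝ} (hab : a < b) {n : ℕ} {f : ℝ → ℝ}
    (hf : IsPLInterp a b n (fun x => x ^ 2) f) {k : ℕ} (hk : k < 2 ^ n) {x : ℝ}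
    (hx : x ∈ Icc (node a b n k) (node a b n (k + 1))) :
    f x = x ^ 2 + (x - node a b n k) * (node a b n (k + 1) - x) :=
  (hf k hk x hx).trans (sq_chord_eq (node_lt_node_succ hab n k).ne x)

lemma saw_succ_eq_tent {a b : ℝ} (hab : a < b) (n : ℕ) {k : ℕ} (hk : k < 2 ^ n) {x : ℝ}
    (hx : x ∈ Icc (node a b n k) (node a b n (k + 1))) :
    saw a b (n + 1) x = tent (node a b n k) (node a b n (k + 1)) x := by
  induction n generalizing k with
  | zero =>
    rw [Nat.lt_one_iff.1 hk, zero_add, node_zero_zero, node_zero_one]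
    rfl
  | succ n ih =>
    have hsaw : saw a b (n + 2) x = hat (saw a b (n + 1) x) := rfl
    obtain ⟨i, rfl | rfl⟩ := Nat.even_or_odd' k
    · have hi : i < 2 ^ n := by rw [pow_succ] at hk; omega
      rw [node_succ_two_mul, node_succ_two_mul_add_one] at hx ⊢
      have hx' : x ∈ Icc (node a b n i) (node a b n (i + 1)) :=
        ⟨hx.1, hx.2.trans (by linarith [node_lt_node_succ hab n i])⟩
      rw [hsaw, ih hi hx', hat_tent_of_le_midpoint (node_lt_node_succ hab n i) hx.2]
    · have hi : i < 2 ^ n := by rw [pow_succ] at hk; omega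
      rw [node_succ_two_mul_add_one, node_succ_two_mul_add_two] at hx ⊢
      have hx' : x ∈ Icc (node a b n i) (node a b n (i + 1)) :=
        ⟨(by linarith [node_lt_node_succ hab n i] : _ ≤ _).trans hx.1, hx.2⟩
      rw [hsaw, ih hi hx', hat_tent_of_midpoint_le (node_lt_node_succ hab n i) hx.1]

lemma interp_sub_interp_succ {a b : ℝ} (hab : a < b) {f : ℕ → ℝ → ℝ}
    (hf : ∀ n, IsPLInterp a b n (fun x => x ^ 2) (f n)) (n : ℕ) {x : ℝ} (hx : x ∈ Icc a b) :
    f n x - f (n + 1) x = (b - a) ^ 2 * saw a b (n + 1) x / 4 ^ (n + 1) := by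
  obtain ⟨k, hk, hxk⟩ := exists_mem_Icc_node hx n
  have hpq := node_lt_node_succ hab n k
  have hscale : (b - a) ^ 2 * saw a b (n + 1) x / 4 ^ (n + 1) =
      (node a b n (k + 1) - node a b n k) ^ 2 / 4 * tent (node a b n k) (node a b n (k + 1)) x := by
    rw [saw_succ_eq_tent hab n hk hxk, node_succ_sub_node, pow_succ, div_pow, ← pow_mul,
      mul_comm n 2, pow_mul]
    ring
  rw [hscale, (hf n).eq_sq_add hab hk hxk]
  rcases le_total x ((node a b n k + node a b n (k + 1)) / 2) with hm | hm
  · have hfine := (hf (n + 1)).eq_sq_add hab (k := 2 * k) (by rw [pow_succ]; omega)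
      (by rw [node_succ_two_mul, node_succ_two_mul_add_one]; exact ⟨hxk.1, hm⟩)
    rw [hfine, node_succ_two_mul, node_succ_two_mul_add_one, ← chord_err_sub_left_half hpq hm]
    ring
  · have hfine := (hf (n + 1)).eq_sq_add hab (k := 2 * k + 1) (by rw [pow_succ]; omega)
      (by rw [node_succ_two_mul_add_one, node_succ_two_mul_add_two]; exact ⟨hm, hxk.2⟩)
    rw [hfine, node_succ_two_mul_add_one, node_succ_two_mul_add_two,
      ← chord_err_sub_right_half hpq hm]
    ring

/-- the telescoping identity
f_m(x) = f₀(x) - Σ_{i=1}^m C·g_i(x)/4^i with C = (b-a)² and f₀(x) = (a+b)x - ab. -/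
theorem interp_telescope (a b : ℝ) (hab : a < b) (m : ℕ) (f : ℕ → ℝ → ℝ)
    (hf : ∀ n, IsPLInterp a b n (fun x => x ^ 2) (f n)) :
    ∀ x ∈ Set.Icc a b,
      f m x = ((a + b) * x - a * b) -
        ∑ i ∈ Finset.Icc 1 m, (b - a) ^ 2 * saw a b i x / 4 ^ i := by
  intro x hx
  induction m with
  | zero =>
    have hf0 := (hf 0).eq_sq_add hab (k := 0) (by norm_num)
      (by rwa [node_zero_zero, zero_add, node_zero_one])
    rw [hf0, node_zero_zero, zero_add, node_zero_one, Finset.Icc_eq_empty (by norm_num),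
      Finset.sum_empty]
    ring
  | succ m ih =>
    rw [Finset.sum_Icc_succ_top (by omega), ← interp_sub_interp_succ hab hf m hx]
    linarith
end

section
/- Let p̃ : D × D → ℝ satisfy |p̃(u,v) - uv| ≤ ε for all u,v ∈ D, where D = [-M, M] and the ranges of all partial products stay in D. Given w_1,...,w_n ∈ D with all partial products ∏_{i=1}^k w_i ∈ D, define P_1 = w_1 and P_{k+1} = p̃(P_k, w_{k+1}) (assuming each P_k ∈ D). Then |P_n - ∏_{i=1}^n w_i| ≤ ε·Σ_{k=0}^{n-2} M^k = ε·(M^{n-1} - 1)/(M - 1) when M ≠ 1. -/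
/-- error propagation for the chained approximate product.
If p̃ multiplies within error ε on D = [-M,M] and P₁ = w₁,
P_{k+1} = p̃(P_k, w_{k+1}), with all w_i, partial products and P_k in D, then
|P_n - ∏_{i=1}^n w_i| ≤ ε·Σ_{k=0}^{n-2} M^k, which equals ε·(M^{n-1}-1)/(M-1)
when M ≠ 1. -/
theorem chained_product_error (M ε : ℝ) (p : ℝ → ℝ → ℝ)
    (hp : ∀ u ∈ Set.Icc (-M) M, ∀ v ∈ Set.Icc (-M) M, |p u v - u * v| ≤ ε)
    (n : ℕ) (hn : 1 ≤ n) (w : ℕ → ℝ) (hw : ∀ i, 1 ≤ i → i ≤ n → w i ∈ Set.Icc (-M) M)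
    (hprod : ∀ k, 1 ≤ k → k ≤ n → (∏ i ∈ Finset.Icc 1 k, w i) ∈ Set.Icc (-M) M)
    (P : ℕ → ℝ) (hP1 : P 1 = w 1)
    (hPrec : ∀ k, 1 ≤ k → k < n → P (k + 1) = p (P k) (w (k + 1)))
    (hPin : ∀ k, 1 ≤ k → k ≤ n → P k ∈ Set.Icc (-M) M) :
    |P n - ∏ i ∈ Finset.Icc 1 n, w i| ≤ ε * ∑ k ∈ Finset.range (n - 1), M ^ k ∧
    (M ≠ 1 → ε * ∑ k ∈ Finset.range (n - 1), M ^ k = ε * (M ^ (n - 1) - 1) / (M - 1)) := by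
  have hw1 := hw 1 le_rfl hn
  have hM : 0 ≤ M := by
    have := hw1.1; have := hw1.2; linarith
  constructor
  · have key : ∀ m, 1 ≤ m → m ≤ n →
        |P m - ∏ i ∈ Finset.Icc 1 m, w i| ≤ ε * ∑ k ∈ Finset.range (m - 1), M ^ k := by
      intro m hm
      induction m, hm using Nat.le_induction with
      | base =>
        intro _
        simp [hP1]
      | succ m hm ih =>
        intro hmn
        have hmn' : m ≤ n := le_trans (Nat.le_succ m) hmn
        have hlt : m < n := hmn
        have hrec := hPrec m hm hlt
        have hwm := hw (m + 1) (by omega) hmn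
        have hPm := hPin m hm hmn'
        have hprodm := hprod m hm hmn'
        have ih' := ih hmn'
        have hε : 0 ≤ ε := le_trans (abs_nonneg _) (hp _ hw1 _ hw1)
        have hstep : ∏ i ∈ Finset.Icc 1 (m + 1), w i =
            (∏ i ∈ Finset.Icc 1 m, w i) * w (m + 1) :=
          Finset.prod_Icc_succ_top (by omega) _
        have h1 : |p (P m) (w (m + 1)) - P m * w (m + 1)| ≤ ε := hp _ hPm _ hwm
        have h2 : |P m * w (m + 1) - (∏ i ∈ Finset.Icc 1 m, w i) * w (m + 1)|
            ≤ M * (ε * ∑ k ∈ Finset.range (m - 1), M ^ k) := by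
          rw [← sub_mul, abs_mul]
          have hwb : |w (m + 1)| ≤ M := abs_le.mpr ⟨hwm.1, hwm.2⟩
          calc |P m - ∏ i ∈ Finset.Icc 1 m, w i| * |w (m + 1)|
              ≤ (ε * ∑ k ∈ Finset.range (m - 1), M ^ k) * M :=
                mul_le_mul ih' hwb (abs_nonneg _) (by positivity)
            _ = M * (ε * ∑ k ∈ Finset.range (m - 1), M ^ k) := by ring
        have hsum : ∑ k ∈ Finset.range (m + 1 - 1), M ^ k =
            M * ∑ k ∈ Finset.range (m - 1), M ^ k + 1 := by
          have : m + 1 - 1 = (m - 1) + 1 := by omega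
          rw [this, geom_sum_succ]
        calc |P (m + 1) - ∏ i ∈ Finset.Icc 1 (m + 1), w i|
            = |(p (P m) (w (m + 1)) - P m * w (m + 1)) +
              (P m * w (m + 1) - (∏ i ∈ Finset.Icc 1 m, w i) * w (m + 1))| := by
              rw [hrec, hstep]; ring_nf
          _ ≤ _ := abs_add_le _ _
          _ ≤ ε + M * (ε * ∑ k ∈ Finset.range (m - 1), M ^ k) := add_le_add h1 h2
          _ = ε * ∑ k ∈ Finset.range (m + 1 - 1), M ^ k := by rw [hsum]; ring
    exact key n hn le_rfl
  · intro hM1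
    rw [geom_sum_eq hM1, mul_div_assoc]
end
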